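/- arXiv:1201.4906 — 3 statements merged into one kernel-verified Lean document; each statement's English description precedes it below -/
import Mathlib

section
/- If X is a zero-mean real random variable whose moment generating function M(u) = E[exp(uX)] is finite for all |u| ≤ u₀ (for some u₀ > 0), then for any ζ ≥ sup{M''(u) : -u₀ ≤ u ≤ u₀}, we have M(u) ≤ exp(ζu²/2) for all |u| ≤ u₀. -/
open MeasureTheory ProbabilityTheory Real Set

/-!
The mgf `M` is smooth on the interior of its domain, with `M 0 = 1`, `M' 0 = E[X] = 0` and
`M'' ≤ ζ`, so the second-order Taylor bound gives `M u ≤ 1 + ζ u² / 2 ≤ exp (ζ u² / 2)` for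
`|u| < u₀`. The endpoints `±u₀` follow by continuity: on `[-u₀, u₀]` the integrand `exp (u X)` is
dominated by `exp (-u₀ X) + exp (u₀ X)`.
-/

lemma le_taylor_of_hasDerivAt_le {s : Set ℝ} (hs : Convex ℝ s) (hso : IsOpen s)
    {f f' f'' : ℝ → ℝ} {ζ x₀ x : ℝ}
    (hf : ∀ y ∈ s, HasDerivAt f (f' y) y) (hf' : ∀ y ∈ s, HasDerivAt f' (f'' y) y)
    (hf'' : ∀ y ∈ s, f'' y ≤ ζ) (hx₀ : x₀ ∈ s) (hx : x ∈ s) :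
    f x ≤ f x₀ + f' x₀ * (x - x₀) + ζ * (x - x₀) ^ 2 / 2 := by
  -- The gap `g` between the quadratic and `f` is convex with a critical point at `x₀`.
  set g : ℝ → ℝ := fun y ↦ f x₀ + f' x₀ * (y - x₀) + ζ * (y - x₀) ^ 2 / 2 - f y
  have hg : ∀ y ∈ s, HasDerivAt g (f' x₀ + ζ * (y - x₀) - f' y) y := by
    intro y hy
    have hq : HasDerivAt (fun y ↦ f x₀ + f' x₀ * (y - x₀) + ζ * (y - x₀) ^ 2 / 2)
        (f' x₀ + ζ * (y - x₀)) y := by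
      refine (((((hasDerivAt_id y).sub_const x₀).const_mul (f' x₀)).const_add (f x₀)).add
        (((((hasDerivAt_id y).sub_const x₀).pow 2).const_mul ζ).div_const 2)).congr_deriv ?_
      simp only [id, Nat.cast_ofNat]
      ring
    exact hq.sub (hf y hy)
  have hg' : ∀ y ∈ s, HasDerivAt (fun y ↦ f' x₀ + ζ * (y - x₀) - f' y) (ζ - f'' y) y :=
    fun y hy ↦ (((((hasDerivAt_id y).sub_const x₀).const_mul ζ).const_add (f' x₀)).sub
      (hf' y hy)).congr_deriv (by ring)
  have hconvex : ConvexOn ℝ s g := by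
    refine convexOn_of_hasDerivWithinAt2_nonneg (f' := fun y ↦ f' x₀ + ζ * (y - x₀) - f' y) hs
      (fun y hy ↦ (hg y hy).continuousAt.continuousWithinAt) (fun y hy ↦ ?_) (fun y hy ↦ ?_)
      (fun y hy ↦ sub_nonneg.2 (hf'' y (interior_subset hy)))
    · exact (hg y (interior_subset hy)).hasDerivWithinAt
    · exact (hg' y (interior_subset hy)).hasDerivWithinAt
  have hmin : IsMinOn g s x₀ := by
    refine hconvex.isMinOn_of_rightDeriv_eq_zero (hso.interior_eq.symm ▸ hx₀) ?_
    rw [(hg x₀ hx₀).hasDerivWithinAt.derivWithin (uniqueDiffWithinAt_Ioi x₀)]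
    ring
  have hgx : g x₀ ≤ g x := hmin hx
  simp only [g, sub_self, mul_zero, add_zero] at hgx
  linarith

namespace ProbabilityTheory

variable {Ω : Type*} {m : MeasurableSpace Ω} {X : Ω → ℝ} {μ : Measure Ω}

lemma exp_mul_le_exp_mul_add_exp_mul {a b t : ℝ} (hat : a ≤ t) (htb : t ≤ b) (x : ℝ) :
    exp (t * x) ≤ exp (a * x) + exp (b * x) := by
  rcases le_total 0 x with hx | hx
  · exact (exp_le_exp.2 (mul_le_mul_of_nonneg_right htb hx)).trans
      (le_add_of_nonneg_left (exp_nonneg _))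
  · exact (exp_le_exp.2 (mul_le_mul_of_nonpos_right hat hx)).trans
      (le_add_of_nonneg_right (exp_nonneg _))

lemma continuousOn_mgf_Icc {a b : ℝ} (ha : Integrable (fun ω ↦ exp (a * X ω)) μ)
    (hb : Integrable (fun ω ↦ exp (b * X ω)) μ) :
    ContinuousOn (mgf X μ) (Icc a b) :=
  continuousOn_of_dominated
    (fun t ht ↦ (integrable_exp_mul_of_le_of_le ha hb ht.1 ht.2).aestronglyMeasurable)
    (fun t ht ↦ ae_of_all _ fun ω ↦ by
      rw [norm_of_nonneg (exp_nonneg _)]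
      exact exp_mul_le_exp_mul_add_exp_mul ht.1 ht.2 (X ω))
    (ha.add hb)
    (ae_of_all _ fun ω ↦ by fun_prop)

lemma mgf_le_of_iteratedDeriv_two_le {s : Set ℝ} (hs : Convex ℝ s) (hso : IsOpen s)
    (hsX : s ⊆ interior (integrableExpSet X μ)) {ζ t : ℝ}
    (hζ : ∀ u ∈ s, iteratedDeriv 2 (mgf X μ) u ≤ ζ) (h0 : 0 ∈ s) (ht : t ∈ s) :
    mgf X μ t ≤ mgf X μ 0 + μ[X] * t + ζ * t ^ 2 / 2 := by
  have hderiv (n : ℕ) (u : ℝ) (hu : u ∈ s) :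
      HasDerivAt (iteratedDeriv n (mgf X μ)) (iteratedDeriv (n + 1) (mgf X μ) u) u := by
    rw [iteratedDeriv_succ]
    exact (differentiableAt_iteratedDeriv_mgf (hsX hu) n).hasDerivAt
  have := le_taylor_of_hasDerivAt_le hs hso (hderiv 0) (hderiv 1) hζ h0 ht
  rwa [iteratedDeriv_zero, iteratedDeriv_one, deriv_mgf_zero (hsX h0), sub_zero] at this

end ProbabilityTheory

theorem stmt0_general {Ω : Type*} [MeasureSpace Ω] [IsProbabilityMeasure (volume : Measure Ω)]
    (X : Ω → ℝ) (hmean : ∫ ω, X ω = 0)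
    (u₀ : ℝ) (hu₀ : 0 < u₀)
    (M : ℝ → ℝ) (hM : ∀ u, M u = ∫ ω, Real.exp (u * X ω))
    (hint : ∀ u : ℝ, |u| ≤ u₀ → Integrable (fun ω => Real.exp (u * X ω)))
    (ζ : ℝ) (hζ : ∀ u ∈ Icc (-u₀) u₀, iteratedDeriv 2 M u ≤ ζ) :
    ∀ u : ℝ, |u| ≤ u₀ → M u ≤ Real.exp (ζ * u ^ 2 / 2) := by
  obtain rfl : M = mgf X volume := funext hM
  have hIoo : Ioo (-u₀) u₀ ⊆ interior (integrableExpSet X volume) := by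
    rw [← interior_Icc]
    exact interior_mono fun t ht ↦ hint t (abs_le.2 ht)
  have hopen : ∀ t ∈ Ioo (-u₀) u₀, mgf X volume t ≤ exp (ζ * t ^ 2 / 2) := by
    intro t ht
    calc mgf X volume t ≤ mgf X volume 0 + volume[X] * t + ζ * t ^ 2 / 2 :=
          mgf_le_of_iteratedDeriv_two_le (convex_Ioo _ _) isOpen_Ioo hIoo
            (fun u hu ↦ hζ u (Ioo_subset_Icc_self hu)) ⟨neg_lt_zero.2 hu₀, hu₀⟩ ht
      _ = ζ * t ^ 2 / 2 + 1 := by rw [mgf_zero, hmean]; ring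
      _ ≤ exp (ζ * t ^ 2 / 2) := add_one_le_exp _
  have hclosure : closure (Ioo (-u₀) u₀) = Icc (-u₀) u₀ := closure_Ioo (by linarith)
  have hcont : ContinuousOn (mgf X volume) (Icc (-u₀) u₀) :=
    continuousOn_mgf_Icc (hint _ (by rw [abs_neg, abs_of_pos hu₀])) (hint _ (abs_of_pos hu₀).le)
  intro u hu
  have hu' : u ∈ closure (Ioo (-u₀) u₀) := hclosure ▸ abs_le.1 hu
  exact le_on_closure hopen (hclosure ▸ hcont) (by fun_prop) hu'

/-- If `X` is a zero-mean random variable whose mgf `M u = E[exp (u X)]` is finite for all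
`|u| ≤ u₀`, then for any `ζ` at least the supremum of the second derivative of `M` on
`[-u₀, u₀]`, we have `M u ≤ exp (ζ u² / 2)` for all `|u| ≤ u₀`. -/
theorem stmt0 {Ω : Type*} [MeasureSpace Ω] [IsProbabilityMeasure (volume : Measure Ω)]
    (X : Ω → ℝ) (hXmeas : Measurable X) (hmean : ∫ ω, X ω = 0)
    (u₀ : ℝ) (hu₀ : 0 < u₀)
    (M : ℝ → ℝ) (hM : ∀ u, M u = ∫ ω, Real.exp (u * X ω))
    (hint : ∀ u : ℝ, |u| ≤ u₀ → Integrable (fun ω => Real.exp (u * X ω)))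
    (ζ : ℝ) (hζ : ∀ u ∈ Icc (-u₀) u₀, iteratedDeriv 2 M u ≤ ζ) :
    ∀ u : ℝ, |u| ≤ u₀ → M u ≤ Real.exp (ζ * u ^ 2 / 2) :=
  stmt0_general X hmean u₀ hu₀ M hM hint ζ hζ
end

section
/- Every compact subset A of ℝ^d whose linear span has dimension d admits a barycentric spanner: there exist x₁,...,x_d ∈ A such that every x ∈ A can be written as x = Σᵢ aᵢxᵢ with coefficients aᵢ ∈ [-1, 1]. -/
/-!
Among all `d`-tuples of points of `A`, choose one maximising the absolute value of the
determinant; it exists by compactness and its determinant is nonzero because `A` contains a basis.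
By Cramer's rule, the `i`-th coordinate of `x ∈ A` in this basis is the ratio of the determinant
of the tuple with its `i`-th point replaced by `x` to the maximal determinant, so it lies in
`[-1, 1]`.
-/

open Module Set Submodule

def IsBarycentricSpanner {ι M : Type*} [Fintype ι] [AddCommGroup M] [Module ℝ M]
    (A : Set M) (b : ι → M) : Prop :=
  (∀ i, b i ∈ A) ∧ ∀ x ∈ A, ∃ a : ι → ℝ, (∀ i, |a i| ≤ 1) ∧ x = ∑ i, a i • b i

theorem Module.Basis.exists_basis_forall_mem {ι K V : Type*} [DivisionRing K] [AddCommGroup V]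
    [Module K V] (e : Basis ι K V) {s : Set V} (hs : ⊤ ≤ span K s) :
    ∃ c : Basis ι K V, ∀ i, c i ∈ s := by
  let c := (Basis.ofSpan hs).reindex ((Basis.ofSpan hs).indexEquiv e)
  exact ⟨c, fun i => Basis.ofSpan_subset hs (by simp [c])⟩

section

variable {ι M : Type*} [Fintype ι] [DecidableEq ι] [AddCommGroup M] [Module ℝ M]

theorem isBarycentricSpanner_of_isMaxOn_abs_det (e : Basis ι ℝ M) {A : Set M} {b : ι → M}
    (hb : b ∈ univ.pi fun _ => A) (hmax : IsMaxOn (fun v => |e.det v|) (univ.pi fun _ => A) b)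
    (hdet : e.det b ≠ 0) : IsBarycentricSpanner A b := by
  obtain ⟨hli, hsp⟩ := e.is_basis_iff_det.mpr (isUnit_iff_ne_zero.mpr hdet)
  let B := Basis.mk hli hsp.ge
  refine ⟨fun i => hb i (mem_univ i), fun x hx => ⟨B.repr x, fun i => ?_, ?_⟩⟩
  · have hupdate : Function.update b i x ∈ univ.pi fun _ => A := by
      intro j _
      rcases eq_or_ne j i with rfl | hj
      · simpa using hx
      · simpa [hj] using hb j (mem_univ j)
    have hcramer : e.det b * B.repr x i = e.det (Function.update b i x) := by
      simpa only [LinearMap.smul_apply, Basis.coord_apply, smul_eq_mul,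
        MultilinearMap.toLinearMap_apply, AlternatingMap.coe_multilinearMap] using
        congrArg (· x) (e.det_smul_mk_coord_eq_det_update hli hsp.ge i)
    have hle : |e.det b| * |B.repr x i| ≤ |e.det b| * 1 := by
      rw [← abs_mul, hcramer, mul_one]
      exact hmax hupdate
    exact le_of_mul_le_mul_left hle (abs_pos.mpr hdet)
  · conv_lhs => rw [← B.sum_repr x]
    simp [B]

variable [TopologicalSpace M] [IsTopologicalAddGroup M] [ContinuousSMul ℝ M] [T2Space M]
  [FiniteDimensional ℝ M]

theorem Module.Basis.continuous_det (e : Basis ι ℝ M) : Continuous e.det := by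
  have hcoord : ∀ i, Continuous (e.coord i) := fun i => (e.coord i).continuous_of_finiteDimensional
  show Continuous fun v => (e.toMatrix v).det
  exact Continuous.matrix_det (continuous_matrix fun i j => (hcoord i).comp (continuous_apply j))

theorem exists_isBarycentricSpanner (e : Basis ι ℝ M) {A : Set M} (hA : IsCompact A)
    (hspan : span ℝ A = ⊤) : ∃ b : ι → M, IsBarycentricSpanner A b := by
  obtain ⟨c, hcA⟩ := e.exists_basis_forall_mem hspan.ge
  have hc : ⇑c ∈ univ.pi fun _ => A := fun i _ => hcA i
  obtain ⟨b, hb, hmax⟩ := (isCompact_univ_pi fun _ => hA).exists_isMaxOn ⟨c, hc⟩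
    (continuous_abs.comp e.continuous_det).continuousOn
  have hdet : e.det b ≠ 0 := by
    intro hzero
    have hle : |e.det c| ≤ |e.det b| := hmax hc
    rw [hzero, abs_zero, abs_nonpos_iff] at hle
    exact (e.isUnit_det c).ne_zero hle
  exact ⟨b, isBarycentricSpanner_of_isMaxOn_abs_det e hb hmax hdet⟩

end

theorem stmt5_general (d : ℕ) (A : Set (EuclideanSpace ℝ (Fin d)))
    (hA : IsCompact A)
    (hspan : Submodule.span ℝ A = ⊤) :
    ∃ b : Fin d → EuclideanSpace ℝ (Fin d),
      (∀ i, b i ∈ A) ∧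
        ∀ x ∈ A, ∃ a : Fin d → ℝ, (∀ i, |a i| ≤ 1) ∧ x = ∑ i, a i • b i :=
  exists_isBarycentricSpanner (EuclideanSpace.basisFun (Fin d) ℝ).toBasis hA hspan

/-- Every nonempty compact subset of `ℝ^d` that spans `ℝ^d` admits a barycentric spanner:
`d` points of the set such that every point of the set is a linear combination of them with
coefficients in `[-1, 1]`. -/
theorem stmt5 (d : ℕ) (A : Set (EuclideanSpace ℝ (Fin d)))
    (hA : IsCompact A) (hne : A.Nonempty)
    (hspan : Submodule.span ℝ A = ⊤) :
    ∃ b : Fin d → EuclideanSpace ℝ (Fin d),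
      (∀ i, b i ∈ A) ∧
        ∀ x ∈ A, ∃ a : Fin d → ℝ, (∀ i, |a i| ≤ 1) ∧ x = ∑ i, a i • b i :=
  stmt5_general d A hA hspan
end

section
/- Let B = {x₁,...,x_d} be a barycentric spanner of a finite set A ⊂ ℝ^d, let θ ∈ ℝ^d be a true cost vector with unique minimizer x* = argmin_{x∈A} ⟨θ,x⟩, and let c > 0 satisfy ⟨θ,x⟩ - ⟨θ,x*⟩ ≥ c for all x ∈ A with x ≠ x*. If an estimate θ̂ satisfies |⟨θ̂,xᵢ⟩ - ⟨θ,xᵢ⟩| < c/(2d) for all i = 1,...,d, then the linearly interpolated estimates satisfy argmin_{x∈A} ⟨θ̂,x⟩ = x*. -/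
open Finset

/-!
Every `x ∈ A` is a combination `∑ aᵢ xᵢ` of the spanner with `|aᵢ| ≤ 1`, so the estimation error
`⟨θ̂ - θ, x⟩ = ∑ aᵢ ⟨θ̂ - θ, xᵢ⟩` is smaller than `d · c/(2d) = c/2` on all of `A`. Perturbing every
cost by less than `c/2` cannot close an optimality gap of `c`.
-/

section BarycentricSpanner

variable {ι E : Type*} [Fintype ι]

theorem LinearMap.abs_apply_sum_smul_le [AddCommGroup E] [Module ℝ E] (f : E →ₗ[ℝ] ℝ)
    (b : ι → E) {a : ι → ℝ} (ha : ∀ i, |a i| ≤ 1) :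
    |f (∑ i, a i • b i)| ≤ ∑ i, |f (b i)| := by
  rw [map_sum]
  calc |∑ i, f (a i • b i)| ≤ ∑ i, |f (a i • b i)| := abs_sum_le_sum_abs _ _
    _ ≤ ∑ i, |f (b i)| := sum_le_sum fun i _ => by
      rw [map_smul, smul_eq_mul, abs_mul]
      exact mul_le_of_le_one_left (abs_nonneg _) (ha i)

theorem abs_inner_sub_sum_smul_lt [Nonempty ι] [NormedAddCommGroup E] [InnerProductSpace ℝ E]
    (θ θ' : E) (b : ι → E) {a : ι → ℝ} (ha : ∀ i, |a i| ≤ 1) {ε : ℝ}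
    (hb : ∀ i, |inner ℝ θ' (b i) - inner ℝ θ (b i)| < ε) :
    |inner ℝ θ' (∑ i, a i • b i) - inner ℝ θ (∑ i, a i • b i)| < Fintype.card ι * ε := by
  have hf (y : E) : innerₛₗ ℝ (θ' - θ) y = inner ℝ θ' y - inner ℝ θ y := by
    rw [innerₛₗ_apply_apply, inner_sub_left]
  simp only [← hf] at hb ⊢
  calc |innerₛₗ ℝ (θ' - θ) (∑ i, a i • b i)| ≤ ∑ i, |innerₛₗ ℝ (θ' - θ) (b i)| :=
        (innerₛₗ ℝ (θ' - θ)).abs_apply_sum_smul_le b ha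
    _ < ∑ _i : ι, ε := sum_lt_sum_of_nonempty univ_nonempty fun i _ => hb i
    _ = Fintype.card ι * ε := by rw [sum_const, card_univ, nsmul_eq_mul]

end BarycentricSpanner

theorem stmt7_general (d : ℕ) (hd : 0 < d) (A : Finset (EuclideanSpace ℝ (Fin d)))
    (b : Fin d → EuclideanSpace ℝ (Fin d))
    (hspanner : ∀ x ∈ A, ∃ a : Fin d → ℝ, (∀ i, |a i| ≤ 1) ∧ x = ∑ i, a i • b i)
    (θ θhat : EuclideanSpace ℝ (Fin d)) (xstar : EuclideanSpace ℝ (Fin d))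
    (hxstar : xstar ∈ A) (c : ℝ) (hc : 0 < c)
    (hgap : ∀ x ∈ A, x ≠ xstar → (inner ℝ θ xstar : ℝ) + c ≤ inner ℝ θ x)
    (hclose : ∀ i, |(inner ℝ θhat (b i) : ℝ) - inner ℝ θ (b i)| < c / (2 * d)) :
    ∀ x ∈ A, x ≠ xstar → (inner ℝ θhat xstar : ℝ) < inner ℝ θhat x := by
  have : Nonempty (Fin d) := Fin.pos_iff_nonempty.mp hd
  have error_lt : ∀ y ∈ A, |(inner ℝ θhat y : ℝ) - inner ℝ θ y| < c / 2 := by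
    intro y hy
    obtain ⟨a, ha, rfl⟩ := hspanner y hy
    calc _ < Fintype.card (Fin d) * (c / (2 * d)) := abs_inner_sub_sum_smul_lt θ θhat b ha hclose
      _ = c / 2 := by rw [Fintype.card_fin]; field_simp
  intro x hx hne
  have hx_err := abs_lt.mp (error_lt x hx)
  have hxstar_err := abs_lt.mp (error_lt xstar hxstar)
  linarith [hgap x hx hne]

/-- If `{x₁, …, x_d}` is a barycentric spanner of a finite set `A ⊆ ℝ^d`, `x*` uniquely
minimizes the true cost `⟨θ, ·⟩` over `A` with optimality gap at least `c`, and the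
estimate `θ̂` is within `c/(2d)` of `θ` on each spanner element, then `x*` is the unique
minimizer of the estimated cost `⟨θ̂, ·⟩` over `A`. -/
theorem stmt7 (d : ℕ) (hd : 0 < d) (A : Finset (EuclideanSpace ℝ (Fin d)))
    (b : Fin d → EuclideanSpace ℝ (Fin d)) (hbA : ∀ i, b i ∈ A)
    (hspanner : ∀ x ∈ A, ∃ a : Fin d → ℝ, (∀ i, |a i| ≤ 1) ∧ x = ∑ i, a i • b i)
    (θ θhat : EuclideanSpace ℝ (Fin d)) (xstar : EuclideanSpace ℝ (Fin d))
    (hxstar : xstar ∈ A) (c : ℝ) (hc : 0 < c)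
    (hgap : ∀ x ∈ A, x ≠ xstar → (inner ℝ θ xstar : ℝ) + c ≤ inner ℝ θ x)
    (hclose : ∀ i, |(inner ℝ θhat (b i) : ℝ) - inner ℝ θ (b i)| < c / (2 * d)) :
    ∀ x ∈ A, x ≠ xstar → (inner ℝ θhat xstar : ℝ) < inner ℝ θhat x :=
  stmt7_general d hd A b hspanner θ θhat xstar hxstar c hc hgap hclose
end
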